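/- There is no Eulerian Sheffer poset of rank n ≥ 6 with binomial factorial function B(3) = 6 and Sheffer factorial function D(3) = 10. -/

import Mathlib

open scoped Classical

/-! ## Basic notions: saturated chains, rank functions, Euler–Poincaré, Eulerian,
binomial / Sheffer / triangular posets. -/

/-- A saturated (maximal) chain from `x` to `y` in a poset, encoded as a list. -/
def IsSatChain {α : Type*} [PartialOrder α] (x y : α) (l : List α) : Prop :=
  l.Chain' (· ⋖ ·) ∧ l.head? = some x ∧ l.getLast? = some y

/-- The number of maximal chains of the interval `[x, y]`. -/
noncomputable def chainCount {α : Type*} [PartialOrder α] (x y : α) : ℕ :=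
  Nat.card {l : List α // IsSatChain x y l}

/-- `rk` is a rank function for a graded poset with `⊥`:
the bottom has rank `0` and ranks increase by one across cover relations. -/
def IsRankFunction {α : Type*} [PartialOrder α] [OrderBot α] (rk : α → ℕ) : Prop :=
  rk ⊥ = 0 ∧ ∀ x y : α, x ⋖ y → rk y = rk x + 1

/-- The interval `[x, y]` satisfies the Euler–Poincaré relation: it has as many elements
of even rank as of odd rank. -/
def EulerPoincare {α : Type*} [Fintype α] [PartialOrder α] (rk : α → ℕ) (x y : α) : Prop :=
  (Finset.univ.filter fun z => x ≤ z ∧ z ≤ y ∧ Even (rk z)).card =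
    (Finset.univ.filter fun z => x ≤ z ∧ z ≤ y ∧ ¬ Even (rk z)).card

/-- A graded poset is Eulerian if every non-singleton interval satisfies
the Euler–Poincaré relation. -/
def IsEulerian {α : Type*} [Fintype α] [PartialOrder α] (rk : α → ℕ) : Prop :=
  ∀ x y : α, x < y → EulerPoincare rk x y

/-- A binomial poset: the number of maximal chains of an interval depends only
on its length, via the factorial function `B`. -/
def IsBinomial {α : Type*} [PartialOrder α] (rk : α → ℕ) (B : ℕ → ℕ) : Prop :=
  ∀ x y : α, x ≤ y → chainCount x y = B (rk y - rk x)

/-- A Sheffer poset: Sheffer intervals `[⊥, y]` have `D (ρ y)` maximal chains and binomial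
intervals `[x, y]` with `x ≠ ⊥` have `B (ρ y - ρ x)` maximal chains. -/
def IsSheffer {α : Type*} [PartialOrder α] [OrderBot α] (rk : α → ℕ) (B D : ℕ → ℕ) : Prop :=
  (∀ y : α, chainCount ⊥ y = D (rk y)) ∧
    (∀ x y : α, x ≠ ⊥ → x ≤ y → chainCount x y = B (rk y - rk x))

/-- A triangular poset: the number of maximal chains of `[x, y]` depends only on
`ρ x` and `ρ y`. -/
def IsTriangular {α : Type*} [PartialOrder α] (rk : α → ℕ) (B : ℕ → ℕ → ℕ) : Prop :=
  ∀ x y : α, x ≤ y → chainCount x y = B (rk x) (rk y)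

/-! ## Constructions: summations, dual suspension, butterfly posets, polygon face lattices. -/

/-- The proper part of a bounded poset. -/
abbrev ProperPart (Q : Type*) [PartialOrder Q] [OrderBot Q] [OrderTop Q] : Type _ :=
  {x : Q // x ≠ ⊥ ∧ x ≠ ⊤}

/-- The summation `⊞_{i} Q i` of a family of bounded posets: identify all the minimal
elements and all the maximal elements of the disjoint union of the `Q i`. -/
abbrev FamSum {ι : Type*} (Q : ι → Type*) [∀ i, PartialOrder (Q i)] [∀ i, OrderBot (Q i)]
    [∀ i, OrderTop (Q i)] : Type _ :=
  WithBot (WithTop ((i : ι) × ProperPart (Q i)))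

/-- The `k`-summation `⊞^k Q`: identify all the minimal elements and all the maximal
elements of `k` disjoint copies of `Q`. -/
abbrev KSum (k : ℕ) (Q : Type*) [PartialOrder Q] [OrderBot Q] [OrderTop Q] : Type _ :=
  FamSum (fun _ : Fin k => Q)

/-- The rank function of a `k`-summation, induced by a rank function on `Q`. -/
def ksumRk {k : ℕ} {Q : Type*} [PartialOrder Q] [OrderBot Q] [OrderTop Q] (rk : Q → ℕ) :
    KSum k Q → ℕ :=
  WithBot.recBotCoe 0 (WithTop.recTopCoe (rk ⊤) (fun s => rk s.2.1))

/-- The underlying type of the dual suspension minus its bottom: two new atoms together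
with the proper (non-bottom) part of `P`. -/
def DSuspMid (P : Type*) [PartialOrder P] [OrderBot P] : Type _ :=
  Fin 2 ⊕ {x : P // x ≠ ⊥}

instance DSuspMid.partialOrder (P : Type*) [PartialOrder P] [OrderBot P] :
    PartialOrder (DSuspMid P) where
  le a b :=
    match a, b with
    | .inl i, .inl j => i = j
    | .inl _, .inr _ => True
    | .inr _, .inl _ => False
    | .inr x, .inr y => x ≤ y
  le_refl a := by cases a with
    | inl i => exact rfl
    | inr x => exact le_refl x.1
  le_trans a b c hab hbc := by
    cases a with
    | inl i =>
      cases c with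
      | inl k =>
        cases b with
        | inl j => exact Eq.trans (hab : i = j) (hbc : j = k)
        | inr y => exact ((hbc : False)).elim
      | inr z => trivial
    | inr x =>
      cases b with
      | inl j => exact ((hab : False)).elim
      | inr y =>
        cases c with
        | inl k => exact ((hbc : False)).elim
        | inr z => exact le_trans (α := {x : P // x ≠ ⊥}) hab hbc
  le_antisymm a b hab hba := by
    cases a with
    | inl i =>
      cases b with
      | inl j => exact congrArg Sum.inl (hab : _ = _)
      | inr y => exact ((hba : False)).elim
    | inr x =>
      cases b with
      | inl j => exact ((hab : False)).elim
      | inr y => exact congrArg Sum.inr (le_antisymm (α := {x : P // x ≠ ⊥}) hab hba)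

/-- The dual suspension `Σ*(P)`: insert two new elements between `⊥` and the atoms of `P`. -/
abbrev DSusp (P : Type*) [PartialOrder P] [OrderBot P] : Type _ :=
  WithBot (DSuspMid P)

/-- The rank function of the dual suspension induced by a rank function on `P`. -/
def dsuspRk {P : Type*} [PartialOrder P] [OrderBot P] (rk : P → ℕ) : DSusp P → ℕ :=
  WithBot.recBotCoe 0 (Sum.elim (fun _ => 1) (fun x => rk x.1 + 1))

noncomputable instance DSuspMid.fintype (P : Type*) [PartialOrder P] [OrderBot P] [Fintype P] :
    Fintype (DSuspMid P) := by
  unfold DSuspMid; infer_instance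

instance DSuspMid.orderTop (P : Type*) [PartialOrder P] [OrderBot P] [OrderTop P] [Nontrivial P] :
    OrderTop (DSuspMid P) where
  top := Sum.inr ⟨⊤, fun h => by
    rcases exists_pair_ne P with ⟨a, b, hab⟩
    have ha : a = ⊤ := le_antisymm le_top (h.le.trans bot_le)
    have hb : b = ⊤ := le_antisymm le_top (h.le.trans bot_le)
    exact hab (ha.trans hb.symm)⟩
  le_top a := by
    cases a with
    | inl i => trivial
    | inr x => exact le_top (α := P) (a := x.1)

/-- The butterfly poset `T n` of rank `n`: a `⊥`, a `⊤`, and two elements at each rank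
`1, …, n - 1`; any two elements at consecutive ranks are comparable. -/
def Butterfly (n : ℕ) : Type :=
  {p : Fin (n + 1) × Fin 2 // ((p.1 : ℕ) = 0 ∨ (p.1 : ℕ) = n) → p.2 = 0}

namespace Butterfly

instance (n : ℕ) : PartialOrder (Butterfly n) where
  le p q := p = q ∨ (p.1.1 : ℕ) < (q.1.1 : ℕ)
  le_refl p := Or.inl rfl
  le_trans p q r h₁ h₂ := by
    rcases h₁ with rfl | h₁
    · exact h₂
    · rcases h₂ with rfl | h₂
      · exact Or.inr h₁
      · exact Or.inr (h₁.trans h₂)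
  le_antisymm p q h₁ h₂ := by
    rcases h₁ with rfl | h₁
    · rfl
    · rcases h₂ with rfl | h₂
      · rfl
      · exact absurd (h₁.trans h₂) (lt_irrefl _)

instance (n : ℕ) : OrderBot (Butterfly n) where
  bot := ⟨(0, 0), fun _ => rfl⟩
  bot_le p := by
    rcases Nat.eq_zero_or_pos (p.1.1 : ℕ) with h | h
    · left
      apply Subtype.ext
      have h2 : p.1.2 = 0 := p.2 (Or.inl (by exact_mod_cast h))
      apply Prod.ext
      · exact (Fin.ext (by simpa using h.symm))
      · exact h2.symm
    · exact Or.inr (by simpa using h)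

instance (n : ℕ) : OrderTop (Butterfly n) where
  top := ⟨(Fin.last n, 0), fun _ => rfl⟩
  le_top p := by
    rcases eq_or_lt_of_le (Nat.lt_succ_iff.mp p.1.1.isLt) with h | h
    · left
      apply Subtype.ext
      have h2 : p.1.2 = 0 := p.2 (Or.inr h)
      apply Prod.ext
      · exact (Fin.ext (by simpa using h))
      · exact h2
    · exact Or.inr (by simpa using h)

instance (n : ℕ) : Fintype (Butterfly n) := by
  unfold Butterfly; exact Subtype.fintype _

/-- The rank function of the butterfly poset. -/
def rk {n : ℕ} (p : Butterfly n) : ℕ := p.1.1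

end Butterfly

/-- The middle levels (vertices and edges) of the face lattice of a `q`-gon:
`(0, i)` is the `i`-th vertex and `(1, i)` is the edge joining vertices `i` and `i + 1`. -/
def PolyMid (q : ℕ) : Type := Fin 2 × Fin q

instance PolyMid.partialOrder (q : ℕ) : PartialOrder (PolyMid q) where
  le a b := a = b ∨ (a.1 = 0 ∧ b.1 = 1 ∧ (a.2 = b.2 ∨ (a.2 : ℕ) = ((b.2 : ℕ) + 1) % q))
  le_refl a := Or.inl rfl
  le_trans a b c h₁ h₂ := by
    rcases h₁ with rfl | h₁
    · exact h₂
    · rcases h₂ with rfl | h₂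
      · exact Or.inr h₁
      · obtain ⟨hb, _⟩ := h₂
        rw [h₁.2.1] at hb
        exact absurd hb (by decide)
  le_antisymm a b h₁ h₂ := by
    rcases h₁ with rfl | h₁
    · rfl
    · rcases h₂ with rfl | h₂
      · rfl
      · obtain ⟨hb, _⟩ := h₂
        rw [h₁.2.1] at hb
        exact absurd hb (by decide)

/-- The face lattice `P_q` of a `q`-gon. -/
abbrev PolygonPoset (q : ℕ) : Type := WithBot (WithTop (PolyMid q))

noncomputable instance ProperPart.fintype (Q : Type*) [Fintype Q] [PartialOrder Q]
    [OrderBot Q] [OrderTop Q] : Fintype (ProperPart Q) :=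
  Subtype.fintype _

instance WithTop.instFintypeOfFintype {X : Type*} [Fintype X] : Fintype (WithTop X) :=
  inferInstanceAs (Fintype (Option X))

instance WithBot.instFintypeOfFintype {X : Type*} [Fintype X] : Fintype (WithBot X) :=
  inferInstanceAs (Fintype (Option X))


/-!
In a Sheffer poset an `n`-interval `[x, y]` has `#atoms · B (n - 1)` maximal chains, and also
`#coatoms · B (n - 1)`, or `#coatoms · D (n - 1)` when `x = ⊥`. Together with double counting of
the cover relations between two ranks and the Euler–Poincaré relation, `B 3 = 6` forces the
binomial `4`-intervals to be Boolean (`4` atoms, `6` elements of middle rank, `24` chains), and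
`D 3 = 10` forces `D 4 = 120`.

In a binomial `n`-interval two atoms have at most one common cover: for `n = 3` because the
interval is a triangle, and for `n = 4, 5` because two common covers would have too many
coatoms above them. In a binomial `5`-interval with `k ≤ 7` atoms they have exactly one, since
they then lie below a common coatom and binomial `4`-intervals are Boolean. Every element of
rank `rk x + 2` covers two atoms and every atom has four covers, so `k (k - 1) / 2 = 2 k` and
`k = 5`. On the other hand, counting the ranks of a Sheffer
`6`-interval `[⊥, v]` shows that the number `k` of atoms of the binomial `5`-interval above an
atom of `[⊥, v]` satisfies `k ≤ 6` and `k ≠ 5`.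
-/

open Finset

section Chains

variable {α : Type*} [PartialOrder α]

theorem isSatChain_cons_cons {x y z : α} {t : List α} :
    IsSatChain x y (x :: z :: t) ↔ x ⋖ z ∧ IsSatChain z y (z :: t) := by
  show (List.IsChain _ _ ∧ _ ∧ _) ↔ _ ∧ List.IsChain _ _ ∧ _ ∧ _
  simp [List.getLast?_cons_cons, and_assoc]

theorem IsSatChain.exists_eq_cons {x y : α} {l : List α} (h : IsSatChain x y l) :
    ∃ t, l = x :: t := by
  obtain ⟨-, hx, -⟩ := h
  cases l with
  | nil => simp at hx
  | cons a t => exact ⟨t, by simpa using hx⟩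

theorem IsSatChain.le {x y : α} {l : List α} (h : IsSatChain x y l) : x ≤ y := by
  obtain ⟨t, rfl⟩ := h.exists_eq_cons
  obtain ⟨hc, -, hy⟩ := h
  have hp := List.pairwise_cons.mp (List.isChain_iff_pairwise.mp (hc.imp fun _ _ h => h.le))
  rcases List.mem_cons.mp (List.mem_of_getLast? hy) with rfl | hyt
  exacts [le_rfl, hp.1 y hyt]

theorem IsSatChain.cons {x y z : α} {l : List α} (hxz : x ⋖ z) (hl : IsSatChain z y l) :
    IsSatChain x y (x :: l) := by
  obtain ⟨t, rfl⟩ := hl.exists_eq_cons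
  exact isSatChain_cons_cons.mpr ⟨hxz, hl⟩

theorem IsSatChain.nodup {x y : α} {l : List α} (h : IsSatChain x y l) : l.Nodup :=
  (List.isChain_iff_pairwise.mp (h.1.imp fun _ _ h => h.lt)).nodup

theorem IsSatChain.reverse_map_toDual {x y : α} {l : List α} (h : IsSatChain x y l) :
    IsSatChain (OrderDual.toDual y) (OrderDual.toDual x) (l.map OrderDual.toDual).reverse := by
  obtain ⟨hc, hx, hy⟩ := h
  refine ⟨?_, by simp [List.head?_reverse, hy], by simp [List.getLast?_reverse, hx]⟩
  show List.IsChain _ _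
  rw [List.isChain_reverse, List.isChain_map]
  exact hc.imp fun _ _ h => toDual_covBy_toDual_iff.mpr h

instance [Fintype α] (x y : α) : Finite {l : List α // IsSatChain x y l} :=
  Finite.of_injective (fun l => (⟨l.1, l.2.nodup⟩ : {l : List α // l.Nodup}))
    fun _ _ h => Subtype.ext (congrArg (fun l : {l : List α // l.Nodup} => l.1) h)

theorem isSatChain_self_iff {x : α} {l : List α} : IsSatChain x x l ↔ l = [x] := by
  refine ⟨fun h => ?_, by rintro rfl; exact ⟨List.isChain_singleton x, rfl, rfl⟩⟩
  obtain ⟨t, rfl⟩ := h.exists_eq_cons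
  cases t with
  | nil => rfl
  | cons z t =>
    obtain ⟨hxz, hz⟩ := isSatChain_cons_cons.mp h
    exact absurd hz.le hxz.lt.not_ge

theorem chainCount_self (x : α) : chainCount x x = 1 := by
  rw [chainCount, Nat.card_congr (Equiv.subtypeEquivRight fun _ => isSatChain_self_iff),
    Nat.card_unique]

theorem bijective_cons_isSatChain {x y : α} (hxy : x ≠ y) :
    Function.Bijective fun p : (Σ z : {z // x ⋖ z ∧ z ≤ y}, {l // IsSatChain z.1 y l}) =>
      (⟨x :: p.2.1, p.2.2.cons p.1.2.1⟩ : {l // IsSatChain x y l}) := by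
  constructor
  · rintro ⟨⟨z, hz⟩, ⟨l, hl⟩⟩ ⟨⟨z', hz'⟩, ⟨l', hl'⟩⟩ h
    obtain rfl : l = l' := List.cons_injective (congrArg Subtype.val h)
    obtain rfl : z = z' := Option.some.inj (hl.2.1.symm.trans hl'.2.1)
    rfl
  · rintro ⟨l, hl⟩
    obtain ⟨t, rfl⟩ := hl.exists_eq_cons
    cases t with
    | nil => exact absurd (Option.some.inj hl.2.2) hxy
    | cons z t =>
      obtain ⟨hxz, hz⟩ := isSatChain_cons_cons.mp hl
      exact ⟨⟨⟨z, hxz, hz.le⟩, ⟨z :: t, hz⟩⟩, rfl⟩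

theorem chainCount_eq_sum_covBy [Fintype α] {x y : α} (hxy : x ≠ y) :
    chainCount x y = ∑ z ∈ univ.filter (fun z => x ⋖ z ∧ z ≤ y), chainCount z y := by
  rw [chainCount, ← Nat.card_congr (Equiv.ofBijective _ (bijective_cons_isSatChain hxy)),
    Nat.card_sigma]
  exact (sum_subtype _ (by simp) fun z => chainCount z y).symm

theorem chainCount_toDual (x y : α) :
    chainCount (OrderDual.toDual y) (OrderDual.toDual x) = chainCount x y :=
  Nat.card_congr ⟨fun l => ⟨(l.1.map OrderDual.ofDual).reverse, l.2.reverse_map_toDual⟩,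
    fun l => ⟨(l.1.map OrderDual.toDual).reverse, l.2.reverse_map_toDual⟩,
    fun l => by ext1; simp [List.map_reverse], fun l => by ext1; simp [List.map_reverse]⟩

theorem chainCount_eq_sum_covBy_right [Fintype α] {x y : α} (hxy : x ≠ y) :
    chainCount x y = ∑ z ∈ univ.filter (fun z => x ≤ z ∧ z ⋖ y), chainCount x z := by
  rw [← chainCount_toDual, chainCount_eq_sum_covBy (by simpa using hxy.symm)]
  refine sum_equiv OrderDual.ofDual (fun z => ?_) fun z _ => chainCount_toDual x z.ofDual
  obtain ⟨w, rfl⟩ := OrderDual.toDual.surjective z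
  simp [and_comm]

end Chains

section Rank

variable {α : Type*} [PartialOrder α]

theorem lt_of_le_of_rk_lt (rk : α → ℕ) {x y : α} (hxy : x ≤ y) (h : rk x < rk y) : x < y :=
  hxy.lt_of_ne (ne_of_apply_ne rk h.ne)

variable [OrderBot α] {rk : α → ℕ}

theorem ne_bot_of_rk_pos (hrk : IsRankFunction rk) {x : α} (h : 0 < rk x) : x ≠ ⊥ := by
  rintro rfl
  exact h.ne' hrk.1

variable [Fintype α]

theorem IsRankFunction.strictMono (hrk : IsRankFunction rk) : StrictMono rk := by
  intro x y hxy
  induction y using WellFoundedLT.induction with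
  | _ y ih =>
    obtain ⟨w, hxw, hwy⟩ := exists_le_covBy_of_lt hxy
    rw [hrk.2 w y hwy]
    rcases hxw.eq_or_lt with rfl | hxw
    · exact Nat.lt_succ_self _
    · exact (ih w hwy.lt hxw).trans (Nat.lt_succ_self _)

theorem IsRankFunction.eq_of_le (hrk : IsRankFunction rk) {x y : α} (hxy : x ≤ y)
    (h : rk y ≤ rk x) : x = y :=
  hxy.eq_or_lt.resolve_right fun hlt => (hrk.strictMono hlt).not_ge h

theorem IsRankFunction.covBy_iff (hrk : IsRankFunction rk) {x y : α} :
    x ⋖ y ↔ x ≤ y ∧ rk y = rk x + 1 := by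
  refine ⟨fun h => ⟨h.le, hrk.2 x y h⟩, fun ⟨hxy, hr⟩ => ⟨lt_of_le_of_rk_lt rk hxy (by omega),
    fun z hxz hzy => ?_⟩⟩
  have := hrk.strictMono hxz
  have := hrk.strictMono hzy
  omega

end Rank

namespace EulerianSheffer

variable {α : Type*} [PartialOrder α] [Fintype α] {rk : α → ℕ}

noncomputable def level (rk : α → ℕ) (x y : α) (m : ℕ) : Finset α :=
  univ.filter fun z => x ≤ z ∧ z ≤ y ∧ rk z = m

@[simp]
theorem mem_level {x y z : α} {m : ℕ} : z ∈ level rk x y m ↔ x ≤ z ∧ z ≤ y ∧ rk z = m := by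
  simp [level]

theorem level_mono {x x' y y' : α} (hx : x ≤ x') (hy : y' ≤ y) (m : ℕ) :
    level rk x' y' m ⊆ level rk x y m := fun z hz => by
  rw [mem_level] at hz ⊢
  exact ⟨hx.trans hz.1, hz.2.1.trans hy, hz.2.2⟩

theorem card_level_mul_eq_card_level_mul {x y : α} {m n p q : ℕ}
    (hp : ∀ a ∈ level rk x y m, #(level rk a y n) = p)
    (hq : ∀ b ∈ level rk x y n, #(level rk x b m) = q) :
    #(level rk x y m) * p = #(level rk x y n) * q := by
  refine card_mul_eq_card_mul (· ≤ ·) (fun a ha => ?_) fun b hb => ?_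
  · rw [← hp a ha]
    congr 1
    ext z
    simp only [mem_bipartiteAbove, mem_level] at ha ⊢
    exact ⟨fun ⟨⟨_, hzy, hz⟩, haz⟩ => ⟨haz, hzy, hz⟩,
      fun ⟨haz, hzy, hz⟩ => ⟨⟨ha.1.trans haz, hzy, hz⟩, haz⟩⟩
  · rw [← hq b hb]
    congr 1
    ext z
    simp only [mem_bipartiteBelow, mem_level] at hb ⊢
    exact ⟨fun ⟨⟨hxz, _, hz⟩, hzb⟩ => ⟨hxz, hzb, hz⟩,
      fun ⟨hxz, hzb, hz⟩ => ⟨⟨hxz, hzb.trans hb.2.1, hz⟩, hzb⟩⟩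

theorem sum_neg_one_pow_rk_eq_zero (hE : IsEulerian rk) {x y : α} (hxy : x < y) :
    ∑ z ∈ univ.filter (fun z => x ≤ z ∧ z ≤ y), (-1 : ℤ) ^ rk z = 0 := by
  rw [← sum_filter_add_sum_filter_not _ (fun z => Even (rk z))]
  have hEP := hE x y hxy
  simp only [EulerPoincare, ← and_assoc] at hEP
  rw [sum_congr rfl fun z hz => (mem_filter.mp hz).2.neg_one_pow,
    sum_congr rfl fun z hz => (Nat.not_even_iff_odd.mp (mem_filter.mp hz).2).neg_one_pow,
    sum_const, sum_const, filter_filter, filter_filter, hEP]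
  simp

variable [OrderBot α]

theorem level_rk_left (hrk : IsRankFunction rk) {x y : α} (hxy : x ≤ y) :
    level rk x y (rk x) = {x} := by
  ext z
  simp only [mem_level, mem_singleton]
  exact ⟨fun ⟨hxz, _, hz⟩ => (hrk.eq_of_le hxz hz.le).symm,
    by rintro rfl; exact ⟨le_rfl, hxy, rfl⟩⟩

theorem level_rk_right (hrk : IsRankFunction rk) {x y : α} (hxy : x ≤ y) :
    level rk x y (rk y) = {y} := by
  ext z
  simp only [mem_level, mem_singleton]
  exact ⟨fun ⟨_, hzy, hz⟩ => hrk.eq_of_le hzy hz.ge, by rintro rfl; exact ⟨hxy, le_rfl, rfl⟩⟩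

theorem level_nonempty (hrk : IsRankFunction rk) {x y : α} {m : ℕ} (hxy : x ≤ y)
    (hx : rk x ≤ m) (hy : m ≤ rk y) : (level rk x y m).Nonempty := by
  induction y using WellFoundedLT.induction with
  | _ y ih =>
    rcases hy.eq_or_lt with rfl | hlt
    · exact ⟨y, by simp [hxy]⟩
    · obtain ⟨w, hxw, hwy⟩ := exists_le_covBy_of_lt (lt_of_le_of_rk_lt rk hxy (hx.trans_lt hlt))
      have := hrk.2 w y hwy
      exact (ih w hwy.lt hxw (by omega)).mono (level_mono le_rfl hwy.le m)

theorem filter_covBy_eq_level (hrk : IsRankFunction rk) (x y : α) :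
    univ.filter (fun z => x ⋖ z ∧ z ≤ y) = level rk x y (rk x + 1) := by
  ext z
  simp only [mem_filter, mem_univ, true_and, mem_level, hrk.covBy_iff]
  tauto

theorem filter_covBy_right_eq_level (hrk : IsRankFunction rk) {x y : α} {m : ℕ}
    (hy : rk y = m + 1) : univ.filter (fun z => x ≤ z ∧ z ⋖ y) = level rk x y m := by
  ext z
  simp only [mem_filter, mem_univ, true_and, mem_level, hrk.covBy_iff, hy]
  exact and_congr_right fun _ => and_congr_right fun _ => by omega

theorem chainCount_eq_card_atoms_mul (hrk : IsRankFunction rk) {x y : α} (hxy : x < y) {t : ℕ}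
    (ht : ∀ z ∈ level rk x y (rk x + 1), chainCount z y = t) :
    chainCount x y = #(level rk x y (rk x + 1)) * t := by
  rw [chainCount_eq_sum_covBy hxy.ne, filter_covBy_eq_level hrk, sum_const_nat ht]

theorem chainCount_eq_card_coatoms_mul (hrk : IsRankFunction rk) {x y : α} (hxy : x < y)
    {m t : ℕ} (hy : rk y = m + 1) (ht : ∀ z ∈ level rk x y m, chainCount x z = t) :
    chainCount x y = #(level rk x y m) * t := by
  rw [chainCount_eq_sum_covBy_right hxy.ne, filter_covBy_right_eq_level hrk hy, sum_const_nat ht]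

theorem sum_neg_one_pow_mul_card_level_eq_zero (hrk : IsRankFunction rk) (hE : IsEulerian rk)
    {x y : α} (hxy : x < y) {n : ℕ} (hn : rk y = rk x + n) :
    ∑ j ∈ range (n + 1), (-1 : ℤ) ^ j * #(level rk x y (rk x + j)) = 0 := by
  set I := univ.filter fun z => x ≤ z ∧ z ≤ y
  have hfiber : ∀ j ∈ range (n + 1), ∑ z ∈ I with rk z - rk x = j, (-1 : ℤ) ^ rk z =
      (-1) ^ rk x * ((-1) ^ j * #(level rk x y (rk x + j))) := fun j _ => by
    have hI : I.filter (fun z => rk z - rk x = j) = level rk x y (rk x + j) := by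
      ext z
      simp only [I, mem_filter, mem_univ, true_and, mem_level]
      constructor
      · rintro ⟨⟨hxz, hzy⟩, hz⟩
        have := hrk.strictMono.monotone hxz
        exact ⟨hxz, hzy, by omega⟩
      · rintro ⟨hxz, hzy, hz⟩
        exact ⟨⟨hxz, hzy⟩, by omega⟩
    rw [hI, sum_congr rfl fun z hz => congrArg (fun k => (-1 : ℤ) ^ k) (mem_level.mp hz).2.2,
      sum_const, nsmul_eq_mul, pow_add]
    ring
  have h := sum_fiberwise_of_maps_to (s := I) (t := range (n + 1)) (g := fun z => rk z - rk x)
    (f := fun z => (-1 : ℤ) ^ rk z) fun z hz => by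
      have := hrk.strictMono.monotone (mem_filter.mp hz).2.2
      rw [mem_range]
      omega
  rw [sum_congr rfl hfiber, ← mul_sum, sum_neg_one_pow_rk_eq_zero hE hxy] at h
  exact (mul_eq_zero.mp h).resolve_left (pow_ne_zero _ (by norm_num))

theorem card_level_of_rank_two (hrk : IsRankFunction rk) (hE : IsEulerian rk) {x y : α}
    (hxy : x ≤ y) (hy : rk y = rk x + 2) : #(level rk x y (rk x + 1)) = 2 := by
  have h := sum_neg_one_pow_mul_card_level_eq_zero hrk hE (lt_of_le_of_rk_lt rk hxy (by omega)) hy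
  simp only [sum_range_succ, sum_range_zero, zero_add, add_zero, level_rk_left hrk hxy, ← hy,
    level_rk_right hrk hxy, card_singleton, Nat.cast_one] at h
  linarith

theorem eulerPoincare_rank_four (hrk : IsRankFunction rk) (hE : IsEulerian rk) {x y : α}
    (hxy : x ≤ y) (hy : rk y = rk x + 4) :
    2 + #(level rk x y (rk x + 2)) = #(level rk x y (rk x + 1)) + #(level rk x y (rk x + 3)) := by
  have h := sum_neg_one_pow_mul_card_level_eq_zero hrk hE (lt_of_le_of_rk_lt rk hxy (by omega)) hy
  simp only [sum_range_succ, sum_range_zero, zero_add, add_zero, level_rk_left hrk hxy, ← hy,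
    level_rk_right hrk hxy, card_singleton, Nat.cast_one] at h
  linarith

theorem eulerPoincare_rank_six (hrk : IsRankFunction rk) (hE : IsEulerian rk) {x y : α}
    (hxy : x ≤ y) (hy : rk y = rk x + 6) :
    2 + #(level rk x y (rk x + 2)) + #(level rk x y (rk x + 4)) =
      #(level rk x y (rk x + 1)) + #(level rk x y (rk x + 3)) + #(level rk x y (rk x + 5)) := by
  have h := sum_neg_one_pow_mul_card_level_eq_zero hrk hE (lt_of_le_of_rk_lt rk hxy (by omega)) hy
  simp only [sum_range_succ, sum_range_zero, zero_add, add_zero, level_rk_left hrk hxy, ← hy,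
    level_rk_right hrk hxy, card_singleton, Nat.cast_one] at h
  linarith

theorem chainCount_of_rank_one (hrk : IsRankFunction rk) {x y : α} (hxy : x ≤ y)
    (hy : rk y = rk x + 1) : chainCount x y = 1 := by
  have hL : level rk x y (rk x + 1) = {y} := hy ▸ level_rk_right hrk hxy
  rw [chainCount_eq_card_atoms_mul hrk (lt_of_le_of_rk_lt rk hxy (by omega)) (t := 1), hL,
    card_singleton]
  intro z hz
  rw [hL, mem_singleton] at hz
  rw [hz, chainCount_self]

theorem chainCount_of_rank_two (hrk : IsRankFunction rk) (hE : IsEulerian rk) {x y : α}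
    (hxy : x ≤ y) (hy : rk y = rk x + 2) : chainCount x y = 2 := by
  rw [chainCount_eq_card_atoms_mul hrk (lt_of_le_of_rk_lt rk hxy (by omega)) (t := 1),
    card_level_of_rank_two hrk hE hxy hy]
  intro z hz
  exact chainCount_of_rank_one hrk (mem_level.mp hz).2.1 (by rw [(mem_level.mp hz).2.2]; omega)

theorem mapsTo_atoms_powersetCard (hrk : IsRankFunction rk) (hE : IsEulerian rk) (x y : α) :
    Set.MapsTo (fun f => level rk x f (rk x + 1)) (level rk x y (rk x + 2))
      ((level rk x y (rk x + 1)).powersetCard 2) := fun f hf => by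
  obtain ⟨hxf, hfy, hf⟩ := mem_level.mp hf
  exact mem_powersetCard.mpr ⟨level_mono le_rfl hfy _, card_level_of_rank_two hrk hE hxf hf⟩

/-- In an Eulerian poset an element of rank `rk x + 2` lies above exactly two atoms of `[x, y]`,
so this says that two atoms of an `n`-interval `[x, y]`, `x ≠ ⊥`, have at most one common cover
in it. -/
def AtomSetInjective (rk : α → ℕ) (n : ℕ) : Prop :=
  ∀ ⦃x y : α⦄, x ≠ ⊥ → rk y = rk x + n →
    Set.InjOn (fun f => level rk x f (rk x + 1)) (level rk x y (rk x + 2))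

theorem AtomSetInjective.succ (hrk : IsRankFunction rk) {n : ℕ} (h : AtomSetInjective rk n)
    (hcard : ∀ ⦃x y e f : α⦄, x ≠ ⊥ → rk y = rk x + (n + 1) → e ∈ level rk x y (rk x + 1) →
      f ∈ level rk x y (rk x + 2) → e ≤ f →
        #(level rk e y (rk x + n)) < 2 * #(level rk f y (rk x + n))) :
    AtomSetInjective rk (n + 1) := by
  intro x y hx hy f hf f' hf' hff'
  by_contra hne
  obtain ⟨hxf, hfy, hrf⟩ := mem_level.mp hf
  obtain ⟨e, he⟩ := level_nonempty hrk hxf (m := rk x + 1) (by omega) (by omega)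
  have he' : e ∈ level rk x f' (rk x + 1) :=
    (show level rk x f (rk x + 1) = level rk x f' (rk x + 1) from hff') ▸ he
  have hdisj : Disjoint (level rk f y (rk x + n)) (level rk f' y (rk x + n)) := by
    refine disjoint_left.mpr fun w hw hw' => hne ?_
    obtain ⟨hfw, hwy, hrw⟩ := mem_level.mp hw
    exact h hx hrw (mem_level.mpr ⟨hxf, hfw, hrf⟩)
      (mem_level.mpr ⟨(mem_level.mp hf').1, (mem_level.mp hw').1, (mem_level.mp hf').2.2⟩) hff'
  have hsub : level rk f y (rk x + n) ∪ level rk f' y (rk x + n) ⊆ level rk e y (rk x + n) :=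
    union_subset (level_mono (mem_level.mp he).2.1 le_rfl _)
      (level_mono (mem_level.mp he').2.1 le_rfl _)
  have := card_le_card hsub
  rw [card_union_of_disjoint hdisj] at this
  have heA : e ∈ level rk x y (rk x + 1) := level_mono le_rfl hfy _ he
  have h₁ := hcard hx hy heA hf (mem_level.mp he).2.1
  have h₂ := hcard hx hy heA hf' (mem_level.mp he').2.1
  omega

section Sheffer

variable {B D : ℕ → ℕ}

theorem chainCount_eq_card_atoms_mul_binomial (hrk : IsRankFunction rk) (hS : IsSheffer rk B D)
    {x y : α} (hxy : x ≤ y) {n : ℕ} (hy : rk y = rk x + n + 1) :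
    chainCount x y = #(level rk x y (rk x + 1)) * B n :=
  chainCount_eq_card_atoms_mul hrk (lt_of_le_of_rk_lt rk hxy (by omega)) fun z hz => by
    obtain ⟨hxz, hzy, hz⟩ := mem_level.mp hz
    rw [hS.2 z y (ne_bot_of_rk_pos hrk (by omega)) hzy, show rk y - rk z = n by omega]

theorem chainCount_eq_card_coatoms_mul_binomial (hrk : IsRankFunction rk)
    (hS : IsSheffer rk B D) {x y : α} (hx : x ≠ ⊥) (hxy : x ≤ y) {n : ℕ}
    (hy : rk y = rk x + n + 1) : chainCount x y = #(level rk x y (rk x + n)) * B n :=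
  chainCount_eq_card_coatoms_mul hrk (lt_of_le_of_rk_lt rk hxy (by omega)) hy fun z hz => by
    obtain ⟨hxz, -, hz⟩ := mem_level.mp hz
    rw [hS.2 x z hx hxz, show rk z - rk x = n by omega]

theorem chainCount_bot_eq_card_coatoms_mul (hrk : IsRankFunction rk) (hS : IsSheffer rk B D)
    {y : α} {n : ℕ} (hy : rk y = n + 1) : chainCount ⊥ y = #(level rk ⊥ y n) * D n :=
  chainCount_eq_card_coatoms_mul hrk (ne_bot_of_rk_pos hrk (by omega)).bot_lt hy
    fun z hz => by rw [hS.1 z, (mem_level.mp hz).2.2]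

theorem card_atoms_of_rank_three (hrk : IsRankFunction rk) (hE : IsEulerian rk)
    (hS : IsSheffer rk B D) (hB3 : B 3 = 6) {x y : α} (hx : x ≠ ⊥) (hxy : x ≤ y)
    (hy : rk y = rk x + 3) : #(level rk x y (rk x + 1)) = 3 := by
  have h := chainCount_eq_card_atoms_mul hrk (lt_of_le_of_rk_lt rk hxy (by omega)) (t := 2)
    fun z hz => chainCount_of_rank_two hrk hE (mem_level.mp hz).2.1
      (by rw [(mem_level.mp hz).2.2]; omega)
  rw [hS.2 x y hx hxy, hy, Nat.add_sub_cancel_left, hB3] at h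
  omega

theorem card_coatoms_of_rank_three (hrk : IsRankFunction rk) (hE : IsEulerian rk)
    (hS : IsSheffer rk B D) (hB3 : B 3 = 6) {x y : α} (hx : x ≠ ⊥) (hxy : x ≤ y)
    (hy : rk y = rk x + 3) : #(level rk x y (rk x + 2)) = 3 := by
  have h := chainCount_eq_card_coatoms_mul hrk (lt_of_le_of_rk_lt rk hxy (by omega)) (t := 2)
    hy fun z hz => chainCount_of_rank_two hrk hE (mem_level.mp hz).1 (mem_level.mp hz).2.2
  rw [hS.2 x y hx hxy, hy, Nat.add_sub_cancel_left, hB3] at h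
  omega

theorem card_atoms_of_rank_four (hrk : IsRankFunction rk) (hE : IsEulerian rk)
    (hS : IsSheffer rk B D) (hB3 : B 3 = 6) {x y : α} (hx : x ≠ ⊥) (hxy : x ≤ y)
    (hy : rk y = rk x + 4) : #(level rk x y (rk x + 1)) = 4 := by
  have hA := chainCount_eq_card_atoms_mul_binomial hrk hS hxy (n := 3) hy
  have hC := chainCount_eq_card_coatoms_mul_binomial hrk hS hx hxy (n := 3) hy
  have hAM : #(level rk x y (rk x + 1)) * 3 = #(level rk x y (rk x + 2)) * 2 :=
    card_level_mul_eq_card_level_mul (fun a ha => by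
      obtain ⟨hxa, hay, ha⟩ := mem_level.mp ha
      rw [show rk x + 2 = rk a + 1 by omega]
      exact card_atoms_of_rank_three hrk hE hS hB3 (ne_bot_of_rk_pos hrk (by omega)) hay
        (by omega))
    fun b hb => card_level_of_rank_two hrk hE (mem_level.mp hb).1 (mem_level.mp hb).2.2
  have := eulerPoincare_rank_four hrk hE hxy hy
  rw [hB3] at hA hC
  omega

theorem chainCount_of_rank_four (hrk : IsRankFunction rk) (hE : IsEulerian rk)
    (hS : IsSheffer rk B D) (hB3 : B 3 = 6) {x y : α} (hx : x ≠ ⊥) (hxy : x ≤ y)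
    (hy : rk y = rk x + 4) : chainCount x y = 24 := by
  rw [chainCount_eq_card_atoms_mul_binomial hrk hS hxy (n := 3) hy,
    card_atoms_of_rank_four hrk hE hS hB3 hx hxy hy, hB3]

theorem card_coatoms_of_rank_four (hrk : IsRankFunction rk) (hE : IsEulerian rk)
    (hS : IsSheffer rk B D) (hB3 : B 3 = 6) {x y : α} (hx : x ≠ ⊥) (hxy : x ≤ y)
    (hy : rk y = rk x + 4) : #(level rk x y (rk x + 3)) = 4 := by
  have h := chainCount_eq_card_coatoms_mul_binomial hrk hS hx hxy (n := 3) hy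
  rw [chainCount_of_rank_four hrk hE hS hB3 hx hxy hy, hB3] at h
  omega

theorem card_level_two_of_rank_four (hrk : IsRankFunction rk) (hE : IsEulerian rk)
    (hS : IsSheffer rk B D) (hB3 : B 3 = 6) {x y : α} (hx : x ≠ ⊥) (hxy : x ≤ y)
    (hy : rk y = rk x + 4) : #(level rk x y (rk x + 2)) = 6 := by
  have := eulerPoincare_rank_four hrk hE hxy hy
  rw [card_atoms_of_rank_four hrk hE hS hB3 hx hxy hy,
    card_coatoms_of_rank_four hrk hE hS hB3 hx hxy hy] at this
  omega

theorem chainCount_of_rank_five (hrk : IsRankFunction rk) (hE : IsEulerian rk)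
    (hS : IsSheffer rk B D) (hB3 : B 3 = 6) {x y : α} (hxy : x ≤ y) (hy : rk y = rk x + 5) :
    chainCount x y = #(level rk x y (rk x + 1)) * 24 :=
  chainCount_eq_card_atoms_mul hrk (lt_of_le_of_rk_lt rk hxy (by omega)) fun z hz => by
    obtain ⟨hxz, hzy, hz⟩ := mem_level.mp hz
    exact chainCount_of_rank_four hrk hE hS hB3 (ne_bot_of_rk_pos hrk (by omega)) hzy (by omega)

theorem card_coatoms_of_rank_five (hrk : IsRankFunction rk) (hE : IsEulerian rk)
    (hS : IsSheffer rk B D) (hB3 : B 3 = 6) {x y : α} (hx : x ≠ ⊥) (hxy : x ≤ y)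
    (hy : rk y = rk x + 5) : #(level rk x y (rk x + 4)) = #(level rk x y (rk x + 1)) := by
  have h := chainCount_eq_card_coatoms_mul hrk (lt_of_le_of_rk_lt rk hxy (by omega)) (t := 24)
    (m := rk x + 4) hy fun z hz =>
      chainCount_of_rank_four hrk hE hS hB3 hx (mem_level.mp hz).1 (mem_level.mp hz).2.2
  rw [chainCount_of_rank_five hrk hE hS hB3 hxy hy] at h
  omega

theorem card_coatoms_bot_of_rank_three (hrk : IsRankFunction rk) (hE : IsEulerian rk)
    (hS : IsSheffer rk B D) (hD3 : D 3 = 10) {y : α} (hy : rk y = 3) :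
    #(level rk ⊥ y 2) = 5 := by
  have h := chainCount_eq_card_coatoms_mul hrk (ne_bot_of_rk_pos hrk (by omega)).bot_lt (t := 2)
    hy fun z hz => chainCount_of_rank_two hrk hE bot_le (by rw [hrk.1, (mem_level.mp hz).2.2])
  rw [hS.1 y, hy, hD3] at h
  omega

theorem chainCount_bot_of_rank_four (hrk : IsRankFunction rk) (hE : IsEulerian rk)
    (hS : IsSheffer rk B D) (hB3 : B 3 = 6) (hD3 : D 3 = 10) {y : α} (hy : rk y = 4) :
    chainCount ⊥ y = 120 := by
  have h0 : rk (⊥ : α) = 0 := hrk.1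
  have hA := chainCount_eq_card_atoms_mul_binomial hrk hS (bot_le (a := y)) (n := 3) (by omega)
  have hC := chainCount_bot_eq_card_coatoms_mul hrk hS (n := 3) hy
  have hAM : #(level rk ⊥ y 1) * 3 = #(level rk ⊥ y 2) * 2 :=
    card_level_mul_eq_card_level_mul (fun a ha => by
      obtain ⟨-, hay, ha⟩ := mem_level.mp ha
      rw [show 2 = rk a + 1 by omega]
      exact card_atoms_of_rank_three hrk hE hS hB3 (ne_bot_of_rk_pos hrk (by omega)) hay
        (by omega))
    fun b hb => by
      rw [show 1 = rk ⊥ + 1 by omega]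
      exact card_level_of_rank_two hrk hE bot_le (by rw [(mem_level.mp hb).2.2, h0])
  have hMC : #(level rk ⊥ y 2) * 2 = #(level rk ⊥ y 3) * 5 :=
    card_level_mul_eq_card_level_mul (fun m hm => by
      obtain ⟨-, hmy, hm⟩ := mem_level.mp hm
      rw [show 3 = rk m + 1 by omega]
      exact card_level_of_rank_two hrk hE hmy (by omega))
    fun c hc => card_coatoms_bot_of_rank_three hrk hE hS hD3 (mem_level.mp hc).2.2
  have := eulerPoincare_rank_four hrk hE (bot_le (a := y)) (by omega)
  simp only [h0, zero_add, hB3] at hA this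
  rw [hD3] at hC
  omega

theorem chainCount_bot_of_rank_five (hrk : IsRankFunction rk) (hE : IsEulerian rk)
    (hS : IsSheffer rk B D) (hB3 : B 3 = 6) (hD3 : D 3 = 10) {y : α} (hy : rk y = 5) :
    chainCount ⊥ y = #(level rk ⊥ y 4) * 120 :=
  chainCount_eq_card_coatoms_mul hrk (ne_bot_of_rk_pos hrk (by omega)).bot_lt hy
    fun z hz => chainCount_bot_of_rank_four hrk hE hS hB3 hD3 (mem_level.mp hz).2.2

theorem four_le_card_coatoms_bot_of_rank_five (hrk : IsRankFunction rk) (hE : IsEulerian rk)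
    (hS : IsSheffer rk B D) (hB3 : B 3 = 6) {y : α} (hy : rk y = 5) :
    4 ≤ #(level rk ⊥ y 4) := by
  obtain ⟨z, hz⟩ := level_nonempty hrk (bot_le (a := y)) (m := 1) (by rw [hrk.1]; omega)
    (by omega)
  obtain ⟨-, hzy, hz⟩ := mem_level.mp hz
  have h := card_coatoms_of_rank_four hrk hE hS hB3 (ne_bot_of_rk_pos hrk (by omega)) hzy
    (by omega)
  rw [hz] at h
  exact h.symm.trans_le (card_le_card (level_mono bot_le le_rfl _))

theorem atomSetInjective_three (hrk : IsRankFunction rk) (hE : IsEulerian rk)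
    (hS : IsSheffer rk B D) (hB3 : B 3 = 6) : AtomSetInjective rk 3 := by
  intro x y hx hy f hf f' hf' hff'
  by_contra hne
  obtain ⟨hxf, hfy, hf⟩ := mem_level.mp hf
  obtain ⟨e, he, heS⟩ := exists_mem_notMem_of_card_lt_card
    (s := level rk x f (rk x + 1)) (t := level rk x y (rk x + 1)) (by
      rw [card_level_of_rank_two hrk hE hxf hf,
        card_atoms_of_rank_three hrk hE hS hB3 hx (hxf.trans hfy) hy]
      omega)
  obtain ⟨hxe, hey, he⟩ := mem_level.mp he
  -- the two covers of the third atom `e` are neither `f` nor `f'`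
  have hU : #(level rk e y (rk x + 2)) = 2 := by
    rw [show rk x + 2 = rk e + 1 by omega]
    exact card_level_of_rank_two hrk hE hey (by omega)
  have hfU : f ∉ level rk e y (rk x + 2) := fun h =>
    heS (mem_level.mpr ⟨hxe, (mem_level.mp h).1, he⟩)
  have hf'U : f' ∉ level rk e y (rk x + 2) := fun h => heS (by
    rw [show level rk x f (rk x + 1) = level rk x f' (rk x + 1) from hff']
    exact mem_level.mpr ⟨hxe, (mem_level.mp h).1, he⟩)
  have hsub : insert f (insert f' (level rk e y (rk x + 2))) ⊆ level rk x y (rk x + 2) :=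
    insert_subset (mem_level.mpr ⟨hxf, hfy, hf⟩) (insert_subset hf' (level_mono hxe le_rfl _))
  have := card_le_card hsub
  rw [card_insert_of_notMem (by simp [hne, hfU]), card_insert_of_notMem hf'U, hU,
    card_coatoms_of_rank_three hrk hE hS hB3 hx (hxf.trans hfy) hy] at this
  omega

theorem atomSetInjective_four (hrk : IsRankFunction rk) (hE : IsEulerian rk)
    (hS : IsSheffer rk B D) (hB3 : B 3 = 6) : AtomSetInjective rk 4 := by
  refine (atomSetInjective_three hrk hE hS hB3).succ hrk fun x y e f hx hy he hf hef => ?_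
  obtain ⟨hxe, hey, hre⟩ := mem_level.mp he
  obtain ⟨-, hfy, hrf⟩ := mem_level.mp hf
  rw [show rk x + 3 = rk e + 2 by omega,
    card_coatoms_of_rank_three hrk hE hS hB3 (ne_bot_of_rk_pos hrk (by omega)) hey (by omega),
    show rk e + 2 = rk f + 1 by omega, card_level_of_rank_two hrk hE hfy (by omega)]
  omega

theorem atomSetInjective_five (hrk : IsRankFunction rk) (hE : IsEulerian rk)
    (hS : IsSheffer rk B D) (hB3 : B 3 = 6) : AtomSetInjective rk 5 := by
  refine (atomSetInjective_four hrk hE hS hB3).succ hrk fun x y e f hx hy he hf hef => ?_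
  obtain ⟨hxe, hey, hre⟩ := mem_level.mp he
  obtain ⟨-, hfy, hrf⟩ := mem_level.mp hf
  rw [show rk x + 4 = rk e + 3 by omega,
    card_coatoms_of_rank_four hrk hE hS hB3 (ne_bot_of_rk_pos hrk (by omega)) hey (by omega),
    show rk e + 3 = rk f + 2 by omega,
    card_coatoms_of_rank_three hrk hE hS hB3 (ne_bot_of_rk_pos hrk (by omega)) hfy (by omega)]
  omega

theorem exists_common_cover_of_rank_four (hrk : IsRankFunction rk) (hE : IsEulerian rk)
    (hS : IsSheffer rk B D) (hB3 : B 3 = 6) {x y e e' : α} (hx : x ≠ ⊥) (hxy : x ≤ y)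
    (hy : rk y = rk x + 4) (he : e ∈ level rk x y (rk x + 1)) (he' : e' ∈ level rk x y (rk x + 1))
    (hne : e ≠ e') : ∃ f ∈ level rk x y (rk x + 2), e ≤ f ∧ e' ≤ f := by
  -- `f ↦ atoms below f` is injective from a `6`-set into the `2`-subsets of a `4`-set
  have hsurj := surjOn_of_injOn_of_card_le _ (mapsTo_atoms_powersetCard hrk hE x y)
    (atomSetInjective_four hrk hE hS hB3 hx hy) (by
      rw [card_powersetCard, card_atoms_of_rank_four hrk hE hS hB3 hx hxy hy,
        card_level_two_of_rank_four hrk hE hS hB3 hx hxy hy]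
      rfl)
  obtain ⟨f, hf, hfee⟩ := hsurj (mem_powersetCard.mpr ⟨by simp [insert_subset_iff, he, he'],
    card_pair hne⟩)
  have hle : ∀ a ∈ ({e, e'} : Finset α), a ≤ f := fun a ha => by
    rw [← hfee] at ha
    exact (mem_level.mp ha).2.1
  exact ⟨f, hf, hle e (by simp), hle e' (by simp)⟩

theorem card_atoms_of_rank_five (hrk : IsRankFunction rk) (hE : IsEulerian rk)
    (hS : IsSheffer rk B D) (hB3 : B 3 = 6) {x y : α} (hx : x ≠ ⊥) (hxy : x ≤ y)
    (hy : rk y = rk x + 5) (hk : #(level rk x y (rk x + 1)) ≤ 7) :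
    #(level rk x y (rk x + 1)) = 5 := by
  have hAF : #(level rk x y (rk x + 1)) * 4 = #(level rk x y (rk x + 2)) * 2 :=
    card_level_mul_eq_card_level_mul (fun a ha => by
      obtain ⟨hxa, hay, ha⟩ := mem_level.mp ha
      rw [show rk x + 2 = rk a + 1 by omega]
      exact card_atoms_of_rank_four hrk hE hS hB3 (ne_bot_of_rk_pos hrk (by omega)) hay
        (by omega))
    fun b hb => card_level_of_rank_two hrk hE (mem_level.mp hb).1 (mem_level.mp hb).2.2
  have hcoatoms : ∀ e ∈ level rk x y (rk x + 1), #(level rk e y (rk x + 4)) = 4 := fun e he => by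
    obtain ⟨hxe, hey, he⟩ := mem_level.mp he
    rw [show rk x + 4 = rk e + 3 by omega]
    exact card_coatoms_of_rank_four hrk hE hS hB3 (ne_bot_of_rk_pos hrk (by omega)) hey (by omega)
  have hsurj : Set.SurjOn (fun f => level rk x f (rk x + 1)) (level rk x y (rk x + 2))
      ((level rk x y (rk x + 1)).powersetCard 2) := by
    intro s hs
    obtain ⟨hsA, hs2⟩ := mem_powersetCard.mp hs
    obtain ⟨e, e', hne, rfl⟩ := card_eq_two.mp hs2
    have he : e ∈ level rk x y (rk x + 1) := hsA (by simp)
    have he' : e' ∈ level rk x y (rk x + 1) := hsA (by simp)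
    -- four coatoms above each of `e` and `e'`, among at most seven
    obtain ⟨w, hw, hw'⟩ : ∃ w ∈ level rk e y (rk x + 4), w ∈ level rk e' y (rk x + 4) := by
      refine not_disjoint_iff.mp fun hdisj => ?_
      have hsub : level rk e y (rk x + 4) ∪ level rk e' y (rk x + 4) ⊆ level rk x y (rk x + 4) :=
        union_subset (level_mono (mem_level.mp he).1 le_rfl _)
          (level_mono (mem_level.mp he').1 le_rfl _)
      have := card_le_card hsub
      rw [card_union_of_disjoint hdisj, hcoatoms e he, hcoatoms e' he',
        card_coatoms_of_rank_five hrk hE hS hB3 hx hxy hy] at this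
      omega
    obtain ⟨-, hwy, hrw⟩ := mem_level.mp hw
    obtain ⟨f, hf, hef, he'f⟩ := exists_common_cover_of_rank_four hrk hE hS hB3 hx
      ((mem_level.mp he).1.trans (mem_level.mp hw).1) hrw
      (mem_level.mpr ⟨(mem_level.mp he).1, (mem_level.mp hw).1, (mem_level.mp he).2.2⟩)
      (mem_level.mpr ⟨(mem_level.mp he').1, (mem_level.mp hw').1, (mem_level.mp he').2.2⟩) hne
    refine ⟨f, level_mono le_rfl hwy _ hf, (eq_of_subset_of_card_le ?_ ?_).symm⟩
    · simp [insert_subset_iff, (mem_level.mp he).1, (mem_level.mp he').1, hef, he'f,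
        (mem_level.mp he).2.2, (mem_level.mp he').2.2]
    · rw [card_level_of_rank_two hrk hE (mem_level.mp hf).1 (mem_level.mp hf).2.2, card_pair hne]
  have hF := card_nbij _ (mapsTo_atoms_powersetCard hrk hE x y)
    (atomSetInjective_five hrk hE hS hB3 hx hy) hsurj
  rw [card_powersetCard] at hF
  have hA := (level_nonempty hrk hxy (m := rk x + 1) le_self_add (by omega)).card_pos
  generalize #(level rk x y (rk x + 1)) = k at *
  rw [hF] at hAF
  interval_cases k <;> simp_all [Nat.choose]

/-- Eliminating `l₁, …, l₄` leaves `2 k + (k - 5) c l₅ = k l₅`. -/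
theorem le_six_and_ne_five_of_flag_counts {k c l₁ l₂ l₃ l₄ l₅ : ℕ} (h₁₂ : l₁ * k = l₂ * 2)
    (h₂₃ : l₂ * 4 = l₃ * 5) (h₄₅ : l₄ * 2 = l₅ * c) (hch : l₁ * (k * 24) = l₅ * (c * 120))
    (hE : 2 + l₂ + l₄ = l₁ + l₃ + l₅) (hk : k ≤ l₅) (hc : 4 ≤ c) : k ≤ 6 ∧ k ≠ 5 := by
  constructor
  · by_contra! h
    nlinarith
  · rintro rfl
    nlinarith

theorem card_level_two_le_six_and_ne_five (hrk : IsRankFunction rk) (hE : IsEulerian rk)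
    (hS : IsSheffer rk B D) (hB3 : B 3 = 6) (hD3 : D 3 = 10) {z v : α} (hv : rk v = 6)
    (hz : z ∈ level rk ⊥ v 1) : #(level rk z v 2) ≤ 6 ∧ #(level rk z v 2) ≠ 5 := by
  have h0 : rk (⊥ : α) = 0 := hrk.1
  have hB5 : ∀ a ∈ level rk ⊥ v 1, #(level rk a v 2) * 24 = B 5 := fun a ha => by
    obtain ⟨-, hav, ha⟩ := mem_level.mp ha
    have h := chainCount_of_rank_five hrk hE hS hB3 hav (by omega)
    rw [hS.2 a v (ne_bot_of_rk_pos hrk (by omega)) hav, hv, ha] at h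
    exact h.symm
  have hD5 : ∀ u ∈ level rk ⊥ v 5, #(level rk ⊥ u 4) * 120 = D 5 := fun u hu => by
    rw [← chainCount_bot_of_rank_five hrk hE hS hB3 hD3 (mem_level.mp hu).2.2, hS.1 u,
      (mem_level.mp hu).2.2]
  obtain ⟨w, hw⟩ := level_nonempty hrk (bot_le (a := v)) (m := 5) (by omega) (by omega)
  obtain ⟨-, hzv, hrz⟩ := mem_level.mp hz
  have h₁₂ : #(level rk ⊥ v 1) * #(level rk z v 2) = #(level rk ⊥ v 2) * 2 :=
    card_level_mul_eq_card_level_mul (fun a ha => by have := hB5 a ha; have := hB5 z hz; omega)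
      fun e he => by
        have h := card_level_of_rank_two hrk hE (bot_le (a := e))
          (by rw [(mem_level.mp he).2.2]; omega)
        rwa [h0] at h
  have h₂₃ : #(level rk ⊥ v 2) * 4 = #(level rk ⊥ v 3) * 5 :=
    card_level_mul_eq_card_level_mul (fun e he => by
        obtain ⟨-, hev, he⟩ := mem_level.mp he
        have h := card_atoms_of_rank_four hrk hE hS hB3 (ne_bot_of_rk_pos hrk (by omega)) hev
          (by omega)
        rwa [he] at h)
      fun f hf => card_coatoms_bot_of_rank_three hrk hE hS hD3 (mem_level.mp hf).2.2
  have h₄₅ : #(level rk ⊥ v 4) * 2 = #(level rk ⊥ v 5) * #(level rk ⊥ w 4) :=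
    card_level_mul_eq_card_level_mul (fun g hg => by
        obtain ⟨-, hgv, hg⟩ := mem_level.mp hg
        have h := card_level_of_rank_two hrk hE hgv (by omega)
        rwa [hg] at h)
      fun u hu => by have := hD5 u hu; have := hD5 w hw; omega
  have hch : #(level rk ⊥ v 1) * (#(level rk z v 2) * 24) =
      #(level rk ⊥ v 5) * (#(level rk ⊥ w 4) * 120) := by
    have h₁ := chainCount_eq_card_atoms_mul_binomial hrk hS (bot_le (a := v)) (n := 5) (by omega)
    have h₅ := chainCount_bot_eq_card_coatoms_mul hrk hS (n := 5) hv
    rw [h0] at h₁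
    rw [hB5 z hz, hD5 w hw, ← h₁, ← h₅]
  have hEP := eulerPoincare_rank_six hrk hE (bot_le (a := v)) (by omega)
  rw [h0] at hEP
  have hkv : #(level rk z v 2) ≤ #(level rk ⊥ v 5) := by
    have h := card_coatoms_of_rank_five hrk hE hS hB3 (ne_bot_of_rk_pos hrk (by omega)) hzv
      (by omega)
    rw [hrz] at h
    exact h ▸ card_le_card (level_mono bot_le le_rfl _)
  exact le_six_and_ne_five_of_flag_counts h₁₂ h₂₃ h₄₅ hch hEP hkv
    (four_le_card_coatoms_bot_of_rank_five hrk hE hS hB3 (mem_level.mp hw).2.2)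

end Sheffer

end EulerianSheffer

/-- There is no Eulerian Sheffer poset of rank at least `6` with
`B 3 = 6` and `D 3 = 10`. -/
theorem statement13 {α : Type*} [Fintype α] [PartialOrder α] [BoundedOrder α]
    (rk : α → ℕ) (B D : ℕ → ℕ) (hrk : IsRankFunction rk) (hS : IsSheffer rk B D)
    (hE : IsEulerian rk) (hrank : 6 ≤ rk ⊤) (hB3 : B 3 = 6) (hD3 : D 3 = 10) :
    False := by
  open EulerianSheffer in
  obtain ⟨v, hv⟩ := level_nonempty hrk (bot_le (a := (⊤ : α))) (m := 6) (by rw [hrk.1]; omega)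
    hrank
  have hrv := (mem_level.mp hv).2.2
  obtain ⟨z, hz⟩ := level_nonempty hrk (bot_le (a := v)) (m := 1) (by rw [hrk.1]; omega)
    (by omega)
  obtain ⟨-, hzv, hrz⟩ := mem_level.mp hz
  obtain ⟨hle, hne⟩ := card_level_two_le_six_and_ne_five hrk hE hS hB3 hD3 hrv hz
  have h := card_atoms_of_rank_five hrk hE hS hB3 (ne_bot_of_rk_pos hrk (by omega)) hzv
    (by omega) (by rw [hrz]; exact hle.trans (by norm_num))
  rw [hrz] at h
  exact hne h
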